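/- The collection 𝒟 of subsets of ℕ having asymptotic density (i.e., sets A for which lim_{n→∞} |A ∩ {0,...,n-1}|/n exists) is a closed subset of 𝒫(ℕ) with respect to the pseudometric d(A,B) := ν⁺(A △ B). -/

import Mathlib

open Filter
open scoped symmDiff Classical

noncomputable def densSeq (A : Set ℕ) (n : ℕ) : ℝ :=
  ((Finset.range n).filter (· ∈ A)).card / (n : ℝ)

noncomputable def nuPlus (A : Set ℕ) : ℝ :=
  Filter.atTop.limsup (densSeq A)

noncomputable def nuMinus (A : Set ℕ) : ℝ :=
  Filter.atTop.liminf (densSeq A)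

/-! From `B ⊆ (A ∆ B) ∪ A` and `A ⊆ (B ∆ A) ∪ B`, subadditivity gives
`ν⁺(B) ≤ ν⁺(A) + d(A, B)` and `ν⁻(A) ≤ ν⁻(B) + d(A, B)`. For `A ∈ 𝒟` these combine to
`ν⁺(B) - ν⁻(B) ≤ 2 d(A, B)`, which tends to `0` along the approximating sequence. -/

section densSeq

variable (A B : Set ℕ)

lemma densSeq_nonneg (n : ℕ) : 0 ≤ densSeq A n := by
  unfold densSeq; positivity

lemma densSeq_le_one (n : ℕ) : densSeq A n ≤ 1 := by
  unfold densSeq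
  rcases Nat.eq_zero_or_pos n with rfl | hn
  · simp
  · rw [div_le_one (by exact_mod_cast hn)]
    exact_mod_cast (Finset.card_filter_le _ _).trans (Finset.card_range n).le

lemma isBoundedUnder_le_densSeq : IsBoundedUnder (· ≤ ·) atTop (densSeq A) :=
  isBoundedUnder_of ⟨1, densSeq_le_one A⟩

lemma isBoundedUnder_ge_densSeq : IsBoundedUnder (· ≥ ·) atTop (densSeq A) :=
  isBoundedUnder_of ⟨0, densSeq_nonneg A⟩

variable {A B} in
lemma densSeq_mono (h : A ⊆ B) (n : ℕ) : densSeq A n ≤ densSeq B n := by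
  unfold densSeq
  gcongr

lemma densSeq_union_le (n : ℕ) : densSeq (A ∪ B) n ≤ densSeq A n + densSeq B n := by
  unfold densSeq
  rw [← add_div]
  gcongr
  simp only [Set.mem_union, Finset.filter_or]
  exact_mod_cast Finset.card_union_le _ _

end densSeq

section nu

variable (A B : Set ℕ)

lemma nuMinus_le_nuPlus : nuMinus A ≤ nuPlus A :=
  liminf_le_limsup (isBoundedUnder_le_densSeq A) (isBoundedUnder_ge_densSeq A)

variable {A B} in
lemma nuPlus_mono (h : A ⊆ B) : nuPlus A ≤ nuPlus B :=
  limsup_le_limsup (Eventually.of_forall (densSeq_mono h))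
    (isBoundedUnder_ge_densSeq A).isCoboundedUnder_le (isBoundedUnder_le_densSeq B)

variable {A B} in
lemma nuMinus_mono (h : A ⊆ B) : nuMinus A ≤ nuMinus B :=
  liminf_le_liminf (Eventually.of_forall (densSeq_mono h))
    (isBoundedUnder_ge_densSeq A) (isBoundedUnder_le_densSeq B).isCoboundedUnder_ge

lemma nuPlus_union_le : nuPlus (A ∪ B) ≤ nuPlus A + nuPlus B :=
  calc nuPlus (A ∪ B) ≤ atTop.limsup (densSeq A + densSeq B) :=
        limsup_le_limsup (Eventually.of_forall (densSeq_union_le A B))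
          (isBoundedUnder_ge_densSeq _).isCoboundedUnder_le
          (isBoundedUnder_le_add (isBoundedUnder_le_densSeq A) (isBoundedUnder_le_densSeq B))
    _ ≤ nuPlus A + nuPlus B :=
        limsup_add_le (isBoundedUnder_ge_densSeq A) (isBoundedUnder_le_densSeq A)
          (isBoundedUnder_ge_densSeq B).isCoboundedUnder_le (isBoundedUnder_le_densSeq B)

lemma nuMinus_union_le : nuMinus (A ∪ B) ≤ nuPlus A + nuMinus B :=
  calc nuMinus (A ∪ B) ≤ atTop.liminf (densSeq A + densSeq B) :=
        liminf_le_liminf (Eventually.of_forall (densSeq_union_le A B))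
          (isBoundedUnder_ge_densSeq _)
          (isCoboundedUnder_ge_add (isBoundedUnder_le_densSeq A)
            (isBoundedUnder_le_densSeq B).isCoboundedUnder_ge)
    _ ≤ nuPlus A + nuMinus B :=
        liminf_add_le (isBoundedUnder_ge_densSeq A) (isBoundedUnder_le_densSeq A)
          (isBoundedUnder_ge_densSeq B) (isBoundedUnder_le_densSeq B).isCoboundedUnder_ge

lemma nuPlus_le_nuPlus_add_symmDiff : nuPlus B ≤ nuPlus A + nuPlus (A ∆ B) :=
  calc nuPlus B ≤ nuPlus (A ∆ B ∪ A) := nuPlus_mono (le_symmDiff_sup_left A B)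
    _ ≤ nuPlus A + nuPlus (A ∆ B) := (nuPlus_union_le (A ∆ B) A).trans_eq (add_comm _ _)

lemma nuMinus_le_nuMinus_add_symmDiff : nuMinus A ≤ nuMinus B + nuPlus (A ∆ B) := by
  rw [symmDiff_comm A B, add_comm]
  calc nuMinus A ≤ nuMinus (B ∆ A ∪ B) := nuMinus_mono (le_symmDiff_sup_left B A)
    _ ≤ nuPlus (B ∆ A) + nuMinus B := nuMinus_union_le (B ∆ A) B

lemma nuPlus_sub_nuMinus_le_of_eq (hA : nuPlus A = nuMinus A) :
    nuPlus B - nuMinus B ≤ 2 * nuPlus (A ∆ B) := by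
  linarith [nuPlus_le_nuPlus_add_symmDiff A B, nuMinus_le_nuMinus_add_symmDiff A B]

end nu

theorem density_sets_closed (A : ℕ → Set ℕ) (B : Set ℕ)
    (hA : ∀ i, nuPlus (A i) = nuMinus (A i))
    (hlim : Tendsto (fun i => nuPlus (A i ∆ B)) atTop (nhds 0)) :
    nuPlus B = nuMinus B := by
  have hlim2 : Tendsto (fun i => 2 * nuPlus (A i ∆ B)) atTop (nhds 0) := by
    simpa using hlim.const_mul 2
  have hgap : nuPlus B - nuMinus B ≤ 0 :=
    ge_of_tendsto hlim2 <| Eventually.of_forall fun i =>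
      nuPlus_sub_nuMinus_le_of_eq (A i) B (hA i)
  linarith [nuMinus_le_nuPlus B]
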